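/- arXiv:2206.03244 — 4 statements merged into one kernel-verified Lean document; each statement's English description precedes it below -/
import Mathlib

section
/- Let X be a Hausdorff space, φ : X → X continuous, and A ⊆ X. Suppose a ∈ A is a fixed point of φ and there exists a sequence (x_n) in X with x_n → a, x_0 ∉ A, and φ(x_{n+1}) = x_n for all n. Then for every finite family F of continuous self-maps of X containing φ, A is not a strict attractor of the IFS (X, F): there is no open neighborhood U of A such that F^n(S) → A (in the Vietoris topology on nonempty compact sets) for every nonempty compact S ⊆ U. -/
open Filter Topology Set

/-
Along a backward orbit `x` of `φ` converging to `a ∈ A`, the points `x n` (n large) together with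
`a` form a compact set `K` inside any neighbourhood of `A`. Since `φ ∈ F`, the `n`-th Hutchinson
iterate of `K` contains `φ^[n] (x n) = x 0` for all large `n`; but Vietoris convergence to `A` in a
T1 space eventually excludes the point `x 0 ∉ A`.
-/

/-- Convergence of a sequence of sets in the Vietoris topology: the sequence is
eventually in every subbasic Vietoris-open set containing the limit. -/
def VConv {X : Type*} [TopologicalSpace X] (A : ℕ → Set X) (L : Set X) : Prop :=
  (∀ U : Set X, IsOpen U → L ⊆ U → ∀ᶠ n in atTop, A n ⊆ U) ∧
  (∀ U : Set X, IsOpen U → (L ∩ U).Nonempty → ∀ᶠ n in atTop, (A n ∩ U).Nonempty)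

/-- Hutchinson (Barnsley–Hutchinson) operator of a family of maps. -/
def hutch {X : Type*} (F : Set (X → X)) (S : Set X) : Set X := ⋃ f ∈ F, f '' S

/-- Strict attractor of the IFS given by the family `F`. -/
def StrictAttractor {X : Type*} [TopologicalSpace X] (F : Set (X → X)) (A : Set X) : Prop :=
  A.Nonempty ∧ IsCompact A ∧ ∃ U : Set X, IsOpen U ∧ A ⊆ U ∧
    ∀ S : Set X, S.Nonempty → IsCompact S → S ⊆ U →
      VConv (fun n => (hutch F)^[n] S) A

/-- Pointwise basin of a set for the IFS given by `F`. -/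
def pBasin {X : Type*} [TopologicalSpace X] (F : Set (X → X)) (A : Set X) : Set X :=
  {x | VConv (fun n => (hutch F)^[n] {x}) A}

/-- Pointwise attractor of the IFS given by the family `F`. -/
def PtAttractor {X : Type*} [TopologicalSpace X] (F : Set (X → X)) (A : Set X) : Prop :=
  A.Nonempty ∧ IsCompact A ∧ A ⊆ interior (pBasin F A)

/-- Kuratowski lower limit. -/
def KLi {X : Type*} [TopologicalSpace X] (A : ℕ → Set X) : Set X :=
  {x | ∀ U : Set X, IsOpen U → x ∈ U → ∀ᶠ n in atTop, (A n ∩ U).Nonempty}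

/-- Kuratowski upper limit. -/
def KLs {X : Type*} [TopologicalSpace X] (A : ℕ → Set X) : Set X :=
  {x | ∀ U : Set X, IsOpen U → x ∈ U → ∃ᶠ n in atTop, (A n ∩ U).Nonempty}

theorem iterate_apply_eq_of_map_succ {X : Type*} {φ : X → X} {x : ℕ → X}
    (hrec : ∀ n, φ (x (n + 1)) = x n) (n : ℕ) : φ^[n] (x n) = x 0 := by
  induction n with
  | zero => rfl
  | succ n ih => rw [Function.iterate_succ_apply, hrec n, ih]

theorem Filter.Tendsto.exists_isCompact_eventually_mem {X : Type*} [TopologicalSpace X]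
    {x : ℕ → X} {a : X} (hx : Tendsto x atTop (𝓝 a)) {U : Set X} (hU : U ∈ 𝓝 a) :
    ∃ K, IsCompact K ∧ a ∈ K ∧ K ⊆ U ∧ ∀ᶠ n in atTop, x n ∈ K := by
  obtain ⟨N, hN⟩ := eventually_atTop.mp (hx.eventually hU)
  refine ⟨insert a (range fun n => x (n + N)),
    (hx.comp (tendsto_add_atTop_nat N)).isCompact_insert_range, mem_insert a _, ?_, ?_⟩
  · rintro z (rfl | ⟨n, rfl⟩)
    · exact mem_of_mem_nhds hU
    · exact hN _ (Nat.le_add_left N n)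
  · filter_upwards [eventually_ge_atTop N] with n hn
    exact mem_insert_of_mem _ ⟨n - N, by simp only [Nat.sub_add_cancel hn]⟩

theorem VConv.eventually_notMem {X : Type*} [TopologicalSpace X] [T1Space X]
    {A : ℕ → Set X} {L : Set X} (h : VConv A L) {p : X} (hp : p ∉ L) :
    ∀ᶠ n in atTop, p ∉ A n :=
  (h.1 _ isOpen_compl_singleton fun _ hz (hzp : _ = p) => hp (hzp ▸ hz)).mono
    fun _ hn hpn => hn hpn rfl

theorem hutch_mono {X : Type*} (F : Set (X → X)) : Monotone (hutch F) :=
  fun _ _ hST => iUnion₂_mono fun f _ => image_mono (f := f) hST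

theorem image_subset_hutch {X : Type*} {F : Set (X → X)} {f : X → X} (hf : f ∈ F)
    (S : Set X) : f '' S ⊆ hutch F S :=
  subset_iUnion₂ (s := fun g (_ : g ∈ F) => g '' S) f hf

theorem image_iterate_subset_hutch_iterate {X : Type*} {F : Set (X → X)} {f : X → X}
    (hf : f ∈ F) (n : ℕ) (S : Set X) : f^[n] '' S ⊆ (hutch F)^[n] S := by
  induction n generalizing S with
  | zero => simp
  | succ n ih =>
    rw [Function.iterate_succ, image_comp, Function.iterate_succ_apply]
    exact (ih _).trans ((hutch_mono F).iterate n (image_subset_hutch hf S))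

theorem local_repellor_no_strict_attractor_general {X : Type*} [TopologicalSpace X] [T2Space X]
    (φ : X → X) (A : Set X) (a : X) (ha : a ∈ A)
    (x : ℕ → X) (hx : Tendsto x atTop (𝓝 a))
    (hx0 : x 0 ∉ A) (hrec : ∀ n, φ (x (n + 1)) = x n)
    (F : Set (X → X)) (hφF : φ ∈ F) :
    ¬ StrictAttractor F A := by
  rintro ⟨-, -, U, hUopen, hAU, hconv⟩
  obtain ⟨K, hK, haK, hKU, hxK⟩ := hx.exists_isCompact_eventually_mem (hUopen.mem_nhds (hAU ha))
  have hnear : ∀ᶠ n in atTop, x 0 ∈ (hutch F)^[n] K := hxK.mono fun n hn =>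
    image_iterate_subset_hutch_iterate hφF n K ⟨x n, hn, iterate_apply_eq_of_map_succ hrec n⟩
  have hfar : ∀ᶠ n in atTop, x 0 ∉ (hutch F)^[n] K :=
    (hconv K ⟨a, haK⟩ hK hKU).eventually_notMem hx0
  obtain ⟨n, hin, hout⟩ := (hnear.and hfar).exists
  exact hout hin

theorem local_repellor_no_strict_attractor {X : Type*} [TopologicalSpace X] [T2Space X]
    (φ : X → X) (hφ : Continuous φ) (A : Set X) (a : X) (ha : a ∈ A)
    (hfix : φ a = a) (x : ℕ → X) (hx : Tendsto x atTop (𝓝 a))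
    (hx0 : x 0 ∉ A) (hrec : ∀ n, φ (x (n + 1)) = x n)
    (F : Set (X → X)) (hF : F.Finite) (hFcont : ∀ f ∈ F, Continuous f) (hφF : φ ∈ F) :
    ¬ StrictAttractor F A :=
  local_repellor_no_strict_attractor_general φ A a ha x hx hx0 hrec F hφF
end

section
/- If a continuous map φ : X → X on a Hausdorff space X has a local repellor, then Fix(φ) is not a strict attractor of any IFS (finite family of continuous self-maps of X) containing φ. -/
open Filter Topology Set

theorem fix_not_strict_attractor_of_local_repellor {X : Type*} [TopologicalSpace X] [T2Space X]
    (φ : X → X) (hφ : Continuous φ) (a : X) (hfix : φ a = a)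
    (x : ℕ → X) (hx : Tendsto x atTop (𝓝 a))
    (hx0 : φ (x 0) ≠ x 0) (hrec : ∀ n, φ (x (n + 1)) = x n)
    (F : Set (X → X)) (hF : F.Finite) (hFcont : ∀ f ∈ F, Continuous f) (hφF : φ ∈ F) :
    ¬ StrictAttractor F {x : X | φ x = x} := by
  rintro ⟨-, -, U, hUopen, hAU, hconv⟩
  -- iterates of φ map x (n+k) back to x k
  have hiter : ∀ n k, φ^[n] (x (n + k)) = x k := by
    intro n
    induction n with
    | zero => intro k; simp
    | succ n ih =>
      intro k
      have : n + 1 + k = (n + k) + 1 := by omega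
      rw [this, Function.iterate_succ_apply, hrec, ih]
  -- φ-iterates are contained in hutch iterates
  have hsub : ∀ (n : ℕ) (S : Set X), φ^[n] '' S ⊆ (hutch F)^[n] S := by
    intro n
    induction n with
    | zero => intro S; simp
    | succ n ih =>
      intro S
      rintro y ⟨z, hz, rfl⟩
      rw [Function.iterate_succ_apply', Function.iterate_succ_apply']
      have : φ^[n] z ∈ (hutch F)^[n] S := ih S ⟨z, hz, rfl⟩
      exact Set.mem_biUnion hφF ⟨φ^[n] z, this, rfl⟩
  -- a ∈ U, so eventually x n ∈ U
  have haU : a ∈ U := hAU hfix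
  have hev : ∀ᶠ n in atTop, x n ∈ U := hx (hUopen.mem_nhds haU)
  obtain ⟨N, hN⟩ := eventually_atTop.mp hev
  -- the compact set S
  set y : ℕ → X := fun n => x (n + N) with hy
  have hyt : Tendsto y atTop (𝓝 a) := hx.comp (tendsto_atTop_atTop_of_monotone
    (fun i j h => by omega) (fun b => ⟨b, by omega⟩))
  set S : Set X := insert a (Set.range y) with hS
  have hScomp : IsCompact S := hyt.isCompact_insert_range
  have hSU : S ⊆ U := by
    rintro s (rfl | ⟨m, rfl⟩)
    · exact haU
    · exact hN _ (by omega)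
  have hVC := hconv S ⟨a, mem_insert _ _⟩ hScomp hSU
  -- x 0 is not a fixed point, so Fix ⊆ {x 0}ᶜ
  have hopen : IsOpen ({x 0}ᶜ : Set X) := isOpen_compl_singleton
  have hFixsub : {z : X | φ z = z} ⊆ ({x 0}ᶜ : Set X) := by
    intro z hz hmem
    rw [Set.mem_singleton_iff] at hmem
    exact hx0 (hmem ▸ hz)
  have hevc := hVC.1 _ hopen hFixsub
  obtain ⟨M, hM⟩ := eventually_atTop.mp hevc
  -- but x 0 ∈ A n for n ≥ N
  have hx0mem : ∀ n, N ≤ n → x 0 ∈ (hutch F)^[n] S := by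
    intro n hn
    apply hsub n S
    refine ⟨x n, ?_, ?_⟩
    · exact Or.inr ⟨n - N, by simp [hy]; congr 1; omega⟩
    · simpa using hiter n 0
  have h1 := hM (max M N) (le_max_left _ _)
  have h2 := hx0mem (max M N) (le_max_right _ _)
  exact h1 h2 rfl
end

section
/- The singleton {∞} is not a strict attractor of the IFS (ℝ̂, {φ̂}), where φ̂(x) = x+1 on ℝ and φ̂(∞) = ∞: for the compact set K = {∞} ∪ (-∞, 0], the sequence φ̂^n(K) does not converge to {∞} in the Vietoris topology. -/
open Filter Topology Set

open OnePoint in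
/-- The map x ↦ x + 1 on the one-point compactification of ℝ, fixing ∞. -/
noncomputable def phihat : OnePoint ℝ → OnePoint ℝ := OnePoint.map (fun x : ℝ => x + 1)


open OnePoint in
lemma phihat_iter (n : ℕ) (x : ℝ) : phihat^[n] (OnePoint.some x) = OnePoint.some (x + n) := by
  induction n with
  | zero => simp
  | succ n ih =>
    rw [Function.iterate_succ_apply', ih]
    show OnePoint.map _ _ = _
    rw [OnePoint.map_some]
    push_cast
    ring_nf

lemma hutch_iter {X : Type*} (f : X → X) (S : Set X) (n : ℕ) :
    (hutch {f})^[n] S = f^[n] '' S := by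
  induction n with
  | zero => simp
  | succ n ih =>
    rw [Function.iterate_succ_apply', ih]
    simp [hutch, Set.image_image, Function.iterate_succ_apply']

open OnePoint in
lemma key (a : ℝ) (K : Set (OnePoint ℝ)) (hK : OnePoint.some '' Set.Iic a ⊆ K) :
    ¬ VConv (fun n => phihat^[n] '' K) ({(∞ : OnePoint ℝ)}) := by
  rintro ⟨h1, -⟩
  have hU : IsOpen ({OnePoint.some a}ᶜ : Set (OnePoint ℝ)) := isClosed_singleton.isOpen_compl
  have hsub : ({(∞ : OnePoint ℝ)} : Set (OnePoint ℝ)) ⊆ {OnePoint.some a}ᶜ := by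
    intro x hx
    simp only [Set.mem_singleton_iff] at hx
    subst hx
    simp [OnePoint.infty_ne_coe]
  obtain ⟨n, hn⟩ := (h1 _ hU hsub).exists
  have : OnePoint.some a ∈ phihat^[n] '' K :=
    ⟨OnePoint.some (a - n), hK ⟨a - n, by simp, rfl⟩, by rw [phihat_iter]; congr 1; ring⟩
  exact hn this rfl

open OnePoint in
theorem infty_not_strict_attractor :
    ¬ VConv (fun n => phihat^[n] ''
        ({(∞ : OnePoint ℝ)} ∪ (OnePoint.some '' Set.Iic (0 : ℝ))))
      ({(∞ : OnePoint ℝ)} : Set (OnePoint ℝ)) ∧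
    ¬ StrictAttractor {phihat} ({(∞ : OnePoint ℝ)} : Set (OnePoint ℝ)) := by
  have part1 : ¬ VConv (fun n => phihat^[n] ''
        ({(∞ : OnePoint ℝ)} ∪ (OnePoint.some '' Set.Iic (0 : ℝ))))
      ({(∞ : OnePoint ℝ)} : Set (OnePoint ℝ)) :=
    key 0 _ Set.subset_union_right
  refine ⟨part1, ?_⟩
  rintro ⟨-, -, U, hUopen, hAU, hS⟩
  have hmem : (∞ : OnePoint ℝ) ∈ U := hAU rfl
  obtain ⟨-, hcpt⟩ := (OnePoint.isOpen_iff_of_mem hmem).mp hUopen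
  obtain ⟨m, hm⟩ := hcpt.bddBelow.union (bddBelow_singleton (a := (0:ℝ)))
  set a : ℝ := m - 1 with ha
  have haU : ∀ x : ℝ, x ≤ a → (OnePoint.some x : OnePoint ℝ) ∈ U := by
    intro x hx
    by_contra hcon
    have : m ≤ x := hm (Set.mem_union_left _ hcon)
    linarith
  set S : Set (OnePoint ℝ) := {(∞ : OnePoint ℝ)} ∪ OnePoint.some '' Set.Iic a with hSdef
  have hScompl : Sᶜ = OnePoint.some '' Set.Ioi a := by
    ext x
    induction x using OnePoint.rec with
    | infty => simp [hSdef, (OnePoint.infty_ne_coe _).symm]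
    | coe y =>
      simp [hSdef, OnePoint.coe_eq_coe, OnePoint.coe_ne_infty, not_le, eq_comm (a := y)]
  have hSclosed : IsClosed S := by
    rw [← isOpen_compl_iff, hScompl]
    exact OnePoint.isOpenEmbedding_coe.isOpenMap _ isOpen_Ioi
  have hScpt : IsCompact S := hSclosed.isCompact
  have hSU : S ⊆ U := by
    rintro x (hx | ⟨y, hy, rfl⟩)
    · exact hx ▸ hmem
    · exact haU y hy
  have := hS S ⟨∞, Or.inl rfl⟩ hScpt hSU
  rw [show (fun n => (hutch {phihat})^[n] S) = fun n => phihat^[n] '' S from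
    funext fun n => hutch_iter phihat S n] at this
  exact key a S Set.subset_union_right this
end

section
/- Let {X_i}_{i∈I} be Hausdorff subspaces of a Hausdorff space X with union X, and for each i let φ_i : X_i → X_i be an attracting map. Assume X_i ∩ X_j ⊆ Fix(φ_i) ∩ Fix(φ_j) for all distinct i, j, and the resulting glued map Φ : X → X with Φ|_{X_i} = φ_i is continuous. Then Φ is well-defined, Fix(Φ) = ⋃_i Fix(φ_i), and Φ is an attracting map; moreover, if some φ_{i₀} has a local repellor, then Φ has a local repellor. -/
open Filter Topology Set

theorem glue_attracting_maps {X : Type*} [TopologicalSpace X] [T2Space X] {ι : Type*}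
    (Xs : ι → Set X) (hcover : ⋃ i, Xs i = Set.univ)
    (φ : ι → X → X)
    (hmap : ∀ i, Set.MapsTo (φ i) (Xs i) (Xs i))
    (hcont : ∀ i, ContinuousOn (φ i) (Xs i))
    (hattr : ∀ i, ∀ x ∈ Xs i, ∃ y ∈ Xs i, φ i y = y ∧
      Tendsto (fun n => (φ i)^[n] x) atTop (𝓝 y))
    (hoverlap : ∀ i j, i ≠ j → Xs i ∩ Xs j ⊆
      {x ∈ Xs i | φ i x = x} ∩ {x ∈ Xs j | φ j x = x})
    (Φ : X → X) (hΦ : ∀ i, ∀ x ∈ Xs i, Φ x = φ i x) (hΦcont : Continuous Φ) :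
    -- Φ is well-defined: the maps agree on overlaps
    (∀ i j, ∀ x, x ∈ Xs i → x ∈ Xs j → φ i x = φ j x) ∧
    -- Fix(Φ) is the union of the Fix(φᵢ)
    {x : X | Φ x = x} = ⋃ i, {x ∈ Xs i | φ i x = x} ∧
    -- Φ is attracting
    (∀ x : X, ∃ y : X, Φ y = y ∧ Tendsto (fun n => Φ^[n] x) atTop (𝓝 y)) ∧
    -- if some φᵢ₀ has a local repellor then so does Φ
    ((∃ i₀, ∃ a ∈ Xs i₀, φ i₀ a = a ∧ ∃ u : ℕ → X, (∀ n, u n ∈ Xs i₀) ∧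
        Tendsto u atTop (𝓝 a) ∧ φ i₀ (u 0) ≠ u 0 ∧ ∀ n, φ i₀ (u (n + 1)) = u n) →
      ∃ a : X, Φ a = a ∧ ∃ u : ℕ → X, Tendsto u atTop (𝓝 a) ∧ Φ (u 0) ≠ u 0 ∧
        ∀ n, Φ (u (n + 1)) = u n) := by
  have hmem : ∀ x : X, ∃ i, x ∈ Xs i := by
    intro x
    have : x ∈ ⋃ i, Xs i := by rw [hcover]; trivial
    simpa using this
  have hiter : ∀ i, ∀ x ∈ Xs i, ∀ n, Φ^[n] x = (φ i)^[n] x := by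
    intro i x hx n
    induction n with
    | zero => rfl
    | succ n ih =>
      have hxn : (φ i)^[n] x ∈ Xs i := Set.MapsTo.iterate (hmap i) n hx
      rw [Function.iterate_succ_apply', Function.iterate_succ_apply', ih, hΦ i _ hxn]
  refine ⟨?_, ?_, ?_, ?_⟩
  · intro i j x hxi hxj
    by_cases h : i = j
    · subst h; rfl
    · obtain ⟨⟨-, h1⟩, ⟨-, h2⟩⟩ := hoverlap i j h ⟨hxi, hxj⟩
      rw [h1, h2]
  · ext x
    simp only [Set.mem_setOf_eq, Set.mem_iUnion]
    constructor
    · intro hx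
      obtain ⟨i, hi⟩ := hmem x
      exact ⟨i, hi, by rw [← hΦ i x hi, hx]⟩
    · rintro ⟨i, hi, hfix⟩
      rw [hΦ i x hi, hfix]
  · intro x
    obtain ⟨i, hi⟩ := hmem x
    obtain ⟨y, hy, hyfix, hconv⟩ := hattr i x hi
    refine ⟨y, by rw [hΦ i y hy, hyfix], ?_⟩
    simpa only [hiter i x hi] using hconv
  · rintro ⟨i₀, a, ha, hafix, u, hu, hconv, h0, hrec⟩
    refine ⟨a, by rw [hΦ i₀ a ha, hafix], u, hconv, ?_, ?_⟩
    · rw [hΦ i₀ _ (hu 0)]; exact h0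
    · intro n; rw [hΦ i₀ _ (hu (n+1))]; exact hrec n
end
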